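/- arXiv:2512.13664 — 5 statements merged into one kernel-verified Lean document; each statement's English description precedes it below -/
import Mathlib

section
/- Let (E, d) be a metric space, β > 0, and u : E → ℝ with β-exponential slope L := L^β_u(E) < ∞ and assume u is bounded below by m. Then for all x, y ∈ E, |u(x) - u(y)| ≤ (L - β·m)·d(x,y). -/
/-!
The slope inequality for `(x, y)` reads `β (u y - u x) ≤ (L - β u x) (1 - e^{-β d(x,y)})`, and
`1 - e^{-t} ≤ t` turns this into the Lipschitz bound, provided `L - β m ≥ 0`. That sign condition
comes from adding the slope inequalities for `(x, y)` and `(y, x)`, which gives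
`β (u x + u y) ≤ 2 L`.
-/

open Real

section ExpSlope

variable {β L m a b d : ℝ}

theorem sub_le_of_exp_slope (hβ : 0 < β) (hd : 0 ≤ d) (hma : m ≤ a) (hL : β * m ≤ L)
    (h : β * (b - exp (-β * d) * a) ≤ L * (1 - exp (-β * d))) :
    b - a ≤ (L - β * m) * d := by
  have hs_nonneg : 0 ≤ 1 - exp (-β * d) := by
    have : exp (-β * d) ≤ 1 := exp_le_one_iff.2 (by nlinarith)
    linarith
  have hs_le : 1 - exp (-β * d) ≤ β * d := by linarith [add_one_le_exp (-β * d)]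
  refine le_of_mul_le_mul_left ?_ hβ
  calc β * (b - a) = β * (b - exp (-β * d) * a) - β * a * (1 - exp (-β * d)) := by ring
    _ ≤ (L - β * a) * (1 - exp (-β * d)) := by linarith
    _ ≤ (L - β * m) * (1 - exp (-β * d)) := by gcongr
    _ ≤ (L - β * m) * (β * d) := mul_le_mul_of_nonneg_left hs_le (by linarith)
    _ = β * ((L - β * m) * d) := by ring

theorem mul_le_of_exp_slope_of_exp_slope (hβ : 0 < β) (hd : 0 < d) (hma : m ≤ a) (hmb : m ≤ b)
    (hab : β * (b - exp (-β * d) * a) ≤ L * (1 - exp (-β * d)))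
    (hba : β * (a - exp (-β * d) * b) ≤ L * (1 - exp (-β * d))) :
    β * m ≤ L := by
  have hs_pos : 0 < 1 - exp (-β * d) := by
    have : exp (-β * d) < 1 := exp_lt_one_iff.2 (by nlinarith)
    linarith
  have hsum : β * (a + b) ≤ 2 * L := by
    refine le_of_mul_le_mul_right ?_ hs_pos
    linarith
  nlinarith

end ExpSlope

theorem beta_slope_lipschitz {E : Type*} [MetricSpace E]
    (β L m : ℝ) (hβ : 0 < β) (u : E → ℝ)
    (hm : ∀ x : E, m ≤ u x)
    (hslope : ∀ x y : E, x ≠ y →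
      β * (u y - Real.exp (-β * dist x y) * u x) ≤ L * (1 - Real.exp (-β * dist x y))) :
    ∀ x y : E, |u x - u y| ≤ (L - β * m) * dist x y := by
  intro x y
  rcases eq_or_ne x y with rfl | hxy
  · simp
  have hd : 0 < dist x y := dist_pos.2 hxy
  have hxy_slope := hslope x y hxy
  have hyx_slope := hslope y x hxy.symm
  rw [dist_comm y x] at hyx_slope
  have hL : β * m ≤ L :=
    mul_le_of_exp_slope_of_exp_slope hβ hd (hm x) (hm y) hxy_slope hyx_slope
  rw [abs_sub_le_iff]
  exact ⟨sub_le_of_exp_slope hβ hd.le (hm y) hL hyx_slope,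
    sub_le_of_exp_slope hβ hd.le (hm x) hL hxy_slope⟩
end

section
/- Let β > 0 and let g : [0, R) → ℝ satisfy the β-convexity inequality on radii: for all 0 ≤ s ≤ t ≤ r < R, g(t) ≤ ((e^{β(r-t)} - 1)/(e^{β(r-s)} - 1))·g(s) + ((e^{β(r-s)} - e^{β(r-t)})/(e^{β(r-s)} - 1))·g(r). Then the function I(x) := e^{β·τ(x)} g(τ(x)), where τ(x) = log(1+x)/β, is convex on [0, e^{βR} - 1). -/
open Real Set

lemma beta_ratio1 (x y z a b : ℝ) (hx : (0:ℝ) < 1+x) (hz : (0:ℝ) < 1+z)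
    (hxy : x < y) (hzd : z = a*x + b*y) (hab : a + b = 1) :
    ((1+y)/(1+z) - 1) / ((1+y)/(1+x) - 1) * (1+z) = a * (1+x) := by
  have hd : (1+y)/(1+x) - 1 ≠ 0 :=
    sub_ne_zero.mpr (ne_of_gt ((one_lt_div hx).mpr (by linarith)))
  rw [div_mul_eq_mul_div, div_eq_iff hd]
  have key1 : ((1+y)/(1+z) - 1) * (1+z) = y - z := by field_simp; ring
  have key2 : a*(1+x)*((1+y)/(1+x)-1) = a*(y-x) := by field_simp; ring
  rw [key1, key2, hzd]
  linear_combination (-y) * hab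

lemma beta_ratio2 (x y z a b : ℝ) (hx : (0:ℝ) < 1+x) (hz : (0:ℝ) < 1+z) (hy : (0:ℝ) < 1+y)
    (hxy : x < y) (hzd : z = a*x + b*y) (hab : a + b = 1) :
    ((1+y)/(1+x) - (1+y)/(1+z)) / ((1+y)/(1+x) - 1) * (1+z) = b * (1+y) := by
  have hd : (1+y)/(1+x) - 1 ≠ 0 :=
    sub_ne_zero.mpr (ne_of_gt ((one_lt_div hx).mpr (by linarith)))
  rw [div_mul_eq_mul_div, div_eq_iff hd]
  have key1 : ((1+y)/(1+x) - (1+y)/(1+z)) * (1+z) = (1+y)*(1+z)/(1+x) - (1+y) := by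
    field_simp
  have key2 : b*(1+y)*((1+y)/(1+x)-1) = b*(1+y)*(y-x)/(1+x) := by field_simp; ring
  rw [key1, key2, hzd, div_sub' hx.ne', div_eq_div_iff hx.ne' hx.ne']
  linear_combination ((1+x)*(1+y)*x) * hab

lemma beta_aux (β R : ℝ) (hβ : 0 < β) (g : ℝ → ℝ)
    (hg : ∀ s t r : ℝ, 0 ≤ s → s ≤ t → t ≤ r → r < R →
      g t ≤ ((Real.exp (β * (r - t)) - 1) / (Real.exp (β * (r - s)) - 1)) * g s +
            ((Real.exp (β * (r - s)) - Real.exp (β * (r - t))) /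
              (Real.exp (β * (r - s)) - 1)) * g r)
    (x y a b : ℝ) (hx0 : 0 ≤ x) (hyE : y < Real.exp (β * R) - 1)
    (hxy : x ≤ y) (ha : 0 ≤ a) (hb : 0 ≤ b) (hab : a + b = 1) :
    (1 + (a*x + b*y)) * g (Real.log (1 + (a*x + b*y)) / β) ≤
      a * ((1+x) * g (Real.log (1+x) / β)) + b * ((1+y) * g (Real.log (1+y) / β)) := by
  have hβ' : β ≠ 0 := ne_of_gt hβ
  rcases eq_or_lt_of_le hxy with rfl | hlt
  · have hz : a*x + b*x = x := by rw [← add_mul, hab, one_mul]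
    rw [hz]
    have : a * ((1+x) * g (Real.log (1+x) / β)) + b * ((1+x) * g (Real.log (1+x) / β))
        = (1+x) * g (Real.log (1+x) / β) := by rw [← add_mul, hab]; ring
    linarith
  · set z := a*x + b*y with hzdef
    have hxz : x ≤ z := by nlinarith
    have hzy : z ≤ y := by nlinarith
    have hz0 : 0 ≤ z := le_trans hx0 hxz
    have hx1 : (0:ℝ) < 1 + x := by linarith
    have hz1 : (0:ℝ) < 1 + z := by linarith
    have hy1 : (0:ℝ) < 1 + y := by linarith
    set s := Real.log (1+x) / β with hsdef
    set t := Real.log (1+z) / β with htdef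
    set r := Real.log (1+y) / β with hrdef
    have hs0 : 0 ≤ s := div_nonneg (Real.log_nonneg (by linarith)) (le_of_lt hβ)
    have hst : s ≤ t := by rw [hsdef, htdef]; gcongr
    have htr : t ≤ r := by rw [htdef, hrdef]; gcongr
    have hrR : r < R := by
      rw [hrdef, div_lt_iff₀ hβ]
      have := (Real.log_lt_iff_lt_exp hy1).mpr (show 1+y < Real.exp (β*R) by linarith)
      linarith [mul_comm β R, this]
    have hbs : β * s = Real.log (1+x) := by rw [hsdef]; field_simp
    have hbt : β * t = Real.log (1+z) := by rw [htdef]; field_simp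
    have hbr : β * r = Real.log (1+y) := by rw [hrdef]; field_simp
    have e1 : Real.exp (β * (r - s)) = (1+y)/(1+x) := by
      rw [mul_sub, hbr, hbs, Real.exp_sub, Real.exp_log hy1, Real.exp_log hx1]
    have e2 : Real.exp (β * (r - t)) = (1+y)/(1+z) := by
      rw [mul_sub, hbr, hbt, Real.exp_sub, Real.exp_log hy1, Real.exp_log hz1]
    have hineq := hg s t r hs0 hst htr hrR
    rw [e1, e2] at hineq
    have h1 := beta_ratio1 x y z a b hx1 hz1 hlt hzdef hab
    have h2 := beta_ratio2 x y z a b hx1 hz1 hy1 hlt hzdef hab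
    have hmul := mul_le_mul_of_nonneg_left hineq (le_of_lt hz1)
    calc (1 + z) * g t ≤ (1+z) * (((1+y)/(1+z) - 1) / ((1+y)/(1+x) - 1) * g s +
            ((1+y)/(1+x) - (1+y)/(1+z)) / ((1+y)/(1+x) - 1) * g r) := hmul
      _ = (((1+y)/(1+z) - 1) / ((1+y)/(1+x) - 1) * (1+z)) * g s +
          (((1+y)/(1+x) - (1+y)/(1+z)) / ((1+y)/(1+x) - 1) * (1+z)) * g r := by ring
      _ = a * (1+x) * g s + b * (1+y) * g r := by rw [h1, h2]
      _ = a * ((1+x) * g s) + b * ((1+y) * g r) := by ring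

theorem beta_convexity_iff_convex_after_change_of_variables
    (β R : ℝ) (hβ : 0 < β) (hR : 0 < R) (g : ℝ → ℝ)
    (hg : ∀ s t r : ℝ, 0 ≤ s → s ≤ t → t ≤ r → r < R →
      g t ≤ ((Real.exp (β * (r - t)) - 1) / (Real.exp (β * (r - s)) - 1)) * g s +
            ((Real.exp (β * (r - s)) - Real.exp (β * (r - t))) /
              (Real.exp (β * (r - s)) - 1)) * g r) :
    ConvexOn ℝ (Ico (0:ℝ) (Real.exp (β * R) - 1))
      (fun x => Real.exp (β * (Real.log (1 + x) / β)) * g (Real.log (1 + x) / β)) := by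
  have hβ' : β ≠ 0 := ne_of_gt hβ
  have key : ∀ u : ℝ, 0 ≤ u →
      Real.exp (β * (Real.log (1 + u) / β)) * g (Real.log (1 + u) / β)
        = (1+u) * g (Real.log (1+u) / β) := by
    intro u hu
    have h : β * (Real.log (1+u) / β) = Real.log (1+u) := by field_simp
    rw [h, Real.exp_log (by linarith)]
  refine ⟨convex_Ico _ _, ?_⟩
  intro x hx y hy a b ha hb hab
  simp only [smul_eq_mul]
  obtain ⟨hx0, hxE⟩ := hx
  obtain ⟨hy0, hyE⟩ := hy
  have hz0 : 0 ≤ a*x + b*y := by positivity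
  rw [key _ hz0, key _ hx0, key _ hy0]
  rcases le_total x y with h | h
  · exact beta_aux β R hβ g hg x y a b hx0 hyE h ha hb hab
  · have := beta_aux β R hβ g hg y x b a hy0 hxE h hb ha (by linarith)
    have hc : b*y + a*x = a*x + b*y := by rw [add_comm]
    rw [hc] at this
    linarith
end

section
/- Let β > 0 and let g : [0, R) → ℝ satisfy g(t) ≤ ((e^{β(r-t)} - 1)/(e^{β(r-s)} - 1))·g(s) + ((e^{β(r-s)} - e^{β(r-t)})/(e^{β(r-s)} - 1))·g(r) for all 0 ≤ s ≤ t ≤ r < R. Then the function r ↦ β·(g(r) - e^{-βr} g(0))/(1 - e^{-βr}) is nondecreasing on (0, R). -/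
open Real Set

/-
Multiplying by `e^{βr}`, the slope at `r` is `β (e^{βr} g(r) - g(0)) / (e^{βr} - 1)`. Writing
`G(r) = e^{βr} g(r) - g(0)`, the β-convexity inequality with `s = 0` reads
`G(t) ≤ (e^{βt} - 1) / (e^{βr} - 1) · G(r)` for `t ≤ r`, which is the claimed monotonicity.
-/

lemma beta_slope_eq (β : ℝ) (g : ℝ → ℝ) (r : ℝ) :
    β * (g r - exp (-β * r) * g 0) / (1 - exp (-β * r)) =
      β * ((exp (β * r) * g r - g 0) / (exp (β * r) - 1)) := by
  have hexp : exp (β * r) * exp (-β * r) = 1 := by rw [← exp_add]; simp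
  rw [mul_div_assoc, ← mul_div_mul_left _ _ (exp_ne_zero (β * r))]
  congr 2
  · linear_combination (-g 0) * hexp
  · linear_combination -hexp

lemma mul_sub_le_mul_mul_sub_of_le_weighted {x y c p q : ℝ} (hx : 0 < x) (hy : 1 < y)
    (h : q ≤ (y / x - 1) / (y - 1) * c + (y - y / x) / (y - 1) * p) :
    x * q - c ≤ (x - 1) / (y - 1) * (y * p - c) := by
  have hy' : 0 < y - 1 := sub_pos.mpr hy
  have hxq : x * q ≤ ((y - x) * c + y * (x - 1) * p) / (y - 1) := by
    calc x * q ≤ x * ((y / x - 1) / (y - 1) * c + (y - y / x) / (y - 1) * p) :=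
          mul_le_mul_of_nonneg_left h hx.le
      _ = ((y - x) * c + y * (x - 1) * p) / (y - 1) := by field_simp
  calc x * q - c ≤ ((y - x) * c + y * (x - 1) * p) / (y - 1) - c := by linarith
    _ = (x - 1) / (y - 1) * (y * p - c) := by field_simp; ring

lemma div_sub_one_le_div_sub_one_of_le_weighted {x y c p q : ℝ} (hx : 1 < x) (hy : 1 < y)
    (h : q ≤ (y / x - 1) / (y - 1) * c + (y - y / x) / (y - 1) * p) :
    (x * q - c) / (x - 1) ≤ (y * p - c) / (y - 1) := by
  have key := mul_sub_le_mul_mul_sub_of_le_weighted (by linarith) hy h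
  rw [div_le_iff₀ (sub_pos.mpr hx)]
  calc x * q - c ≤ (x - 1) / (y - 1) * (y * p - c) := key
    _ = (y * p - c) / (y - 1) * (x - 1) := by ring

theorem beta_slope_monotone_general (β R : ℝ) (hβ : 0 < β) (g : ℝ → ℝ)
    (hg : ∀ s t r : ℝ, 0 ≤ s → s ≤ t → t ≤ r → r < R →
      g t ≤ ((Real.exp (β * (r - t)) - 1) / (Real.exp (β * (r - s)) - 1)) * g s +
            ((Real.exp (β * (r - s)) - Real.exp (β * (r - t))) /
              (Real.exp (β * (r - s)) - 1)) * g r) :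
    MonotoneOn (fun r => β * (g r - Real.exp (-β * r) * g 0) / (1 - Real.exp (-β * r)))
      (Ioo (0:ℝ) R) := by
  rintro a ⟨ha, -⟩ b ⟨hb, hbR⟩ hab
  have one_lt_exp {r : ℝ} (hr : 0 < r) : 1 < exp (β * r) := one_lt_exp_iff.mpr (mul_pos hβ hr)
  have hweighted := hg 0 a b le_rfl ha.le hab hbR
  rw [sub_zero, mul_sub, exp_sub] at hweighted
  simp only [beta_slope_eq]
  exact mul_le_mul_of_nonneg_left
    (div_sub_one_le_div_sub_one_of_le_weighted (one_lt_exp ha) (one_lt_exp hb) hweighted) hβ.le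

theorem beta_slope_monotone (β R : ℝ) (hβ : 0 < β) (hR : 0 < R) (g : ℝ → ℝ)
    (hg : ∀ s t r : ℝ, 0 ≤ s → s ≤ t → t ≤ r → r < R →
      g t ≤ ((Real.exp (β * (r - t)) - 1) / (Real.exp (β * (r - s)) - 1)) * g s +
            ((Real.exp (β * (r - s)) - Real.exp (β * (r - t))) /
              (Real.exp (β * (r - s)) - 1)) * g r) :
    MonotoneOn (fun r => β * (g r - Real.exp (-β * r) * g 0) / (1 - Real.exp (-β * r)))
      (Ioo (0:ℝ) R) :=
  beta_slope_monotone_general β R hβ g hg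
end

section
/- Let β > 0, z ∈ X a metric space, R > 0, and u : X → ℝ a non-positive function. Suppose for all x, y with d(x,y) ≤ 2R and dist(y, Y) ≥ 3R (for a fixed set Y with dist(z,Y) > 4R) the estimate u(x) ≤ e^{-βd(x,y)} u(y) - u(y)·(e^{-βr}/(1 - e^{-βr}))·(1 - e^{-βd(x,y)}) holds for all r < dist(y, Y). Then sup_{B_R(z)} u ≤ ((e^{Rβ} - 1)/(e^{3Rβ} - 1)) · inf_{B_R(z)} u. -/
/-!
Take r = 3R in the slope bound: since d(y, Y) > 3R this is admissible, and
e^{-3Rβ}/(1 - e^{-3Rβ}) = 1/(e^{3Rβ} - 1) turns the right-hand side into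
u(y)·(e^{β(3R - d(x,y))} - 1)/(e^{3Rβ} - 1). As d(x,y) ≤ 2R and u(y) ≤ 0, this is at most
u(y)·(e^{Rβ} - 1)/(e^{3Rβ} - 1).
-/

open Real Metric

lemma Real.exp_neg_div_one_sub_exp_neg (a : ℝ) : exp (-a) / (1 - exp (-a)) = 1 / (exp a - 1) := by
  rw [← mul_div_mul_right _ _ (exp_pos a).ne', sub_mul, one_mul, ← exp_add, neg_add_cancel, exp_zero]

lemma Real.exp_slope_bound_eq {β r s : ℝ} (q : ℝ) (hβr : β * r ≠ 0) :
    exp (-β * s) * q - q * (exp (-β * r) / (1 - exp (-β * r))) * (1 - exp (-β * s)) =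
      q * (exp (β * (r - s)) - 1) / (exp (β * r) - 1) := by
  have hE : exp (β * r) - 1 ≠ 0 := by
    rw [sub_ne_zero, Ne, exp_eq_one_iff]
    exact hβr
  have hexp : exp (β * (r - s)) = exp (β * r) * exp (-β * s) := by
    rw [← exp_add]
    ring_nf
  rw [neg_mul β r, exp_neg_div_one_sub_exp_neg, hexp]
  field_simp
  ring

lemma Metric.dist_le_two_mul_of_mem_ball {X : Type*} [PseudoMetricSpace X] {x y z : X} {R : ℝ}
    (hx : x ∈ ball z R) (hy : y ∈ ball z R) : dist x y ≤ 2 * R := by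
  rw [mem_ball] at hx hy
  linarith [dist_triangle_right x y z]

lemma Metric.infDist_sub_lt_infDist_of_mem_ball {X : Type*} [PseudoMetricSpace X] {y z : X}
    {R : ℝ} (Y : Set X) (hy : y ∈ ball z R) : infDist z Y - R < infDist y Y := by
  rw [mem_ball'] at hy
  linarith [infDist_le_infDist_add_dist (s := Y) (x := z) (y := y)]

theorem beta_harnack_nonpositive {X : Type*} [MetricSpace X]
    (β R : ℝ) (hβ : 0 < β) (hR : 0 < R)
    (Y : Set X) (z : X) (hz : 4 * R < infDist z Y)
    (u : X → ℝ) (hupos : ∀ x : X, u x ≤ 0)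
    (hslope : ∀ x y : X, dist x y ≤ 2 * R → 3 * R ≤ infDist y Y →
      ∀ r : ℝ, 0 < r → r < infDist y Y →
        u x ≤ Real.exp (-β * dist x y) * u y -
          u y * (Real.exp (-β * r) / (1 - Real.exp (-β * r))) *
            (1 - Real.exp (-β * dist x y))) :
    ∀ x ∈ ball z R, ∀ y ∈ ball z R,
      u x ≤ ((Real.exp (R * β) - 1) / (Real.exp (3 * R * β) - 1)) * u y := by
  intro x hx y hy
  have hxy : dist x y ≤ 2 * R := dist_le_two_mul_of_mem_ball hx hy
  have hyY : 3 * R < infDist y Y := by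
    linarith [infDist_sub_lt_infDist_of_mem_ball Y hy]
  have hE : 0 < exp (β * (3 * R)) - 1 := by
    rw [sub_pos, one_lt_exp_iff]
    positivity
  have hexp : exp (R * β) ≤ exp (β * (3 * R - dist x y)) := by
    rw [exp_le_exp]
    nlinarith
  calc u x ≤ _ := hslope x y hxy hyY.le (3 * R) (by positivity) hyY
    _ = u y * (exp (β * (3 * R - dist x y)) - 1) / (exp (β * (3 * R)) - 1) :=
      exp_slope_bound_eq (u y) (by positivity)
    _ ≤ u y * (exp (R * β) - 1) / (exp (β * (3 * R)) - 1) := by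
      gcongr ?_ / _
      exact mul_le_mul_of_nonpos_left (by linarith) (hupos y)
    _ = _ := by rw [mul_comm β, mul_comm (u y), mul_div_right_comm]
end

section
/- Let β > 0, U ⊆ ℝⁿ open, u : U → ℝ continuous, y ∈ U, and 0 < r < dist(y, ∂U). Suppose u attains at x¹ with |x¹ - y| = r the maximum of u over the closed ball of radius r around y, and suppose u satisfies, for |x - y| ≤ r, u(x) ≤ e^{-β|x-y|}u(y) + (S/β)(1 - e^{-β|x-y|}), where S := β(u(x¹) - e^{-βr}u(y))/(1 - e^{-βr}). Then for every t ∈ [0,1], writing xᵗ = y + t(x¹ - y), one has u(x¹) - e^{-β(1-t)r} u(xᵗ) ≥ (S/β)(1 - e^{-β(1-t)r}). -/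
/-! `u(xᵗ) ≤ φ_{tr}(u y)` and `u(x¹) = φ_r(u y)` for the flow `φ` of `φ' = β (S/β - φ)`.
Since `φ_{(1-t)r}` is monotone and `φ_{(1-t)r} ∘ φ_{tr} = φ_r`, applying `φ_{(1-t)r}` to the first
relation gives `φ_{(1-t)r}(u xᵗ) ≤ u x¹`, which is the claim. -/

open Real Metric

/-- The time-`s` flow of `φ' = β (c - φ)` started at `a`. -/
noncomputable def expRelax (β c s a : ℝ) : ℝ :=
  exp (-β * s) * a + c * (1 - exp (-β * s))

theorem expRelax_expRelax (β c s s' a : ℝ) :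
    expRelax β c s' (expRelax β c s a) = expRelax β c (s + s') a := by
  simp only [expRelax, mul_add, add_comm s s', neg_mul, exp_add]
  ring

theorem expRelax_mono (β c s : ℝ) : Monotone (expRelax β c s) := fun _ _ hab => by
  unfold expRelax
  gcongr

theorem eq_expRelax_of_slope_eq {β r a b S : ℝ} (hβ : 0 < β) (hr : 0 < r)
    (hS : S = β * (b - exp (-β * r) * a) / (1 - exp (-β * r))) :
    b = expRelax β (S / β) r a := by
  have hexp : exp (-β * r) < 1 := exp_lt_one_iff.mpr (by nlinarith)
  rw [expRelax, hS, mul_div_assoc, mul_div_cancel_left₀ _ hβ.ne',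
    div_mul_cancel₀ _ (sub_pos.mpr hexp).ne']
  ring

theorem norm_add_smul_sub_sub {E : Type*} [SeminormedAddCommGroup E] [NormedSpace ℝ E]
    {y x : E} {t : ℝ} (ht : 0 ≤ t) : ‖y + t • (x - y) - y‖ = t * ‖x - y‖ := by
  rw [add_sub_cancel_left, norm_smul, norm_of_nonneg ht]

theorem increasing_slope_core_general {n : ℕ} (β r : ℝ) (hβ : 0 < β) (hr : 0 < r)
    (u : EuclideanSpace ℝ (Fin n) → ℝ)
    (y : EuclideanSpace ℝ (Fin n))
    (x₁ : EuclideanSpace ℝ (Fin n)) (hx₁ : ‖x₁ - y‖ = r)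
    (S : ℝ)
    (hS : S = β * (u x₁ - Real.exp (-β * r) * u y) / (1 - Real.exp (-β * r)))
    (hbound : ∀ x : EuclideanSpace ℝ (Fin n), ‖x - y‖ ≤ r →
      u x ≤ Real.exp (-β * ‖x - y‖) * u y + (S / β) * (1 - Real.exp (-β * ‖x - y‖))) :
    ∀ t ∈ Set.Icc (0:ℝ) 1,
      u x₁ - Real.exp (-β * (1 - t) * r) * u (y + t • (x₁ - y)) ≥
        (S / β) * (1 - Real.exp (-β * (1 - t) * r)) := by
  rintro t ⟨ht0, ht1⟩
  have hnorm : ‖y + t • (x₁ - y) - y‖ = t * r := by rw [norm_add_smul_sub_sub ht0, hx₁]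
  have hxt : u (y + t • (x₁ - y)) ≤ expRelax β (S / β) (t * r) (u y) := by
    have := hbound _ (by rw [hnorm]; nlinarith)
    rwa [hnorm] at this
  have key : expRelax β (S / β) ((1 - t) * r) (u (y + t • (x₁ - y))) ≤ u x₁ :=
    calc expRelax β (S / β) ((1 - t) * r) (u (y + t • (x₁ - y)))
        ≤ expRelax β (S / β) ((1 - t) * r) (expRelax β (S / β) (t * r) (u y)) :=
          expRelax_mono _ _ _ hxt
      _ = expRelax β (S / β) r (u y) := by rw [expRelax_expRelax]; ring_nf
      _ = u x₁ := (eq_expRelax_of_slope_eq hβ hr hS).symm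
  rw [expRelax, ← mul_assoc] at key
  linarith

theorem increasing_slope_core {n : ℕ} (β r : ℝ) (hβ : 0 < β) (hr : 0 < r)
    (U : Set (EuclideanSpace ℝ (Fin n))) (hU : IsOpen U)
    (u : EuclideanSpace ℝ (Fin n) → ℝ) (hu : ContinuousOn u U)
    (y : EuclideanSpace ℝ (Fin n)) (hy : y ∈ U)
    (hball : closedBall y r ⊆ U)
    (x₁ : EuclideanSpace ℝ (Fin n)) (hx₁ : ‖x₁ - y‖ = r)
    (hmaxpt : ∀ x : EuclideanSpace ℝ (Fin n), ‖x - y‖ ≤ r → u x ≤ u x₁)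
    (S : ℝ)
    (hS : S = β * (u x₁ - Real.exp (-β * r) * u y) / (1 - Real.exp (-β * r)))
    (hbound : ∀ x : EuclideanSpace ℝ (Fin n), ‖x - y‖ ≤ r →
      u x ≤ Real.exp (-β * ‖x - y‖) * u y + (S / β) * (1 - Real.exp (-β * ‖x - y‖))) :
    ∀ t ∈ Set.Icc (0:ℝ) 1,
      u x₁ - Real.exp (-β * (1 - t) * r) * u (y + t • (x₁ - y)) ≥
        (S / β) * (1 - Real.exp (-β * (1 - t) * r)) :=
  increasing_slope_core_general β r hβ hr u y x₁ hx₁ S hS hbound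
end
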